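/- arXiv:2508.03942 — 2 statements merged into one kernel-verified Lean document; each statement's English description precedes it below -/
import Mathlib

section
/- (Long-term drift toward the Filippov sliding direction.) Let f_+, f_- ∈ R^n, h_rd ∈ R^{1×n} with h_rd f_+ < 0 < h_rd f_-, and let α_rd = h_rd f_+/(h_rd(f_+ - f_-)) and f_s = f_+ + α_rd(f_- - f_+). Suppose x_ℓ = x_0 + f_+ T_{ℓ,+} + f_- T_{ℓ,-} with T_{ℓ,±} ≥ ℓ t_low for some t_low > 0, T_ℓ = T_{ℓ,+} + T_{ℓ,-}, and suppose |h_rd x_ℓ - h_rd x_0| ≤ C for all ℓ (a uniform bound). Then |(x_ℓ - x_0)/T_ℓ - f_s| ≤ (C (|f_+| + |f_-|)) / (ℓ t_low |h_rd(f_+ - f_-)|), i.e., (x_ℓ - x_0)/T_ℓ = f_s + O(1/ℓ). -/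
open Matrix

/-- Long-term drift toward the Filippov sliding direction. -/
theorem stmt_11 {n : ℕ} (f_p f_m : Fin n → ℝ) (h_rd : Fin n → ℝ)
    (hplus : h_rd ⬝ᵥ f_p < 0) (hminus : 0 < h_rd ⬝ᵥ f_m)
    (α_rd : ℝ) (hα : α_rd = (h_rd ⬝ᵥ f_p) / (h_rd ⬝ᵥ (f_p - f_m)))
    (f_s : Fin n → ℝ) (hfs : f_s = f_p + α_rd • (f_m - f_p))
    (t_low : ℝ) (ht_low : 0 < t_low)
    (ℓ : ℕ) (hℓ : 0 < ℓ)
    (Tlp Tlm : ℝ) (hTlp : (ℓ : ℝ) * t_low ≤ Tlp) (hTlm : (ℓ : ℝ) * t_low ≤ Tlm)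
    (Tl : ℝ) (hTl : Tl = Tlp + Tlm)
    (x0 xl : Fin n → ℝ) (hxl : xl = x0 + Tlp • f_p + Tlm • f_m)
    (C : ℝ) (hC : |h_rd ⬝ᵥ xl - h_rd ⬝ᵥ x0| ≤ C) :
    ‖Tl⁻¹ • (xl - x0) - f_s‖ ≤
      C * (‖f_p‖ + ‖f_m‖) / ((ℓ : ℝ) * t_low * |h_rd ⬝ᵥ (f_p - f_m)|) := by
  have hlt : 0 < (ℓ : ℝ) * t_low := by positivity
  have hTl0 : 0 < Tl := by nlinarith
  have hTlne : Tl ≠ 0 := ne_of_gt hTl0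
  set a := h_rd ⬝ᵥ f_p with ha
  set b := h_rd ⬝ᵥ f_m with hb
  have hd : h_rd ⬝ᵥ (f_p - f_m) = a - b := by
    simp [dotProduct_sub, ha, hb]
  have hab : a - b < 0 := by linarith
  have habne : a - b ≠ 0 := ne_of_lt hab
  have hdot : h_rd ⬝ᵥ xl - h_rd ⬝ᵥ x0 = Tlp * a + Tlm * b := by
    subst hxl
    simp [dotProduct_add, dotProduct_smul, smul_eq_mul]
    ring
  have hC' : |Tlp * a + Tlm * b| ≤ C := hdot ▸ hC
  have hC0 : 0 ≤ C := le_trans (abs_nonneg _) hC'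
  set β : ℝ := Tlm / Tl - α_rd with hβ
  have hkey : Tl⁻¹ • (xl - x0) - f_s = β • (f_m - f_p) := by
    subst hxl hfs
    funext i
    simp only [Pi.sub_apply, Pi.add_apply, Pi.smul_apply, smul_eq_mul, hβ]
    have : Tlp = Tl - Tlm := by linarith
    rw [this]
    field_simp
    ring
  have hβeq : β = -((Tlp * a + Tlm * b) / (Tl * (a - b))) := by
    have hnum : Tlm * (a - b) - Tl * a = -(Tlp * a + Tlm * b) := by rw [hTl]; ring
    rw [hβ, hα, hd, div_sub_div _ _ hTlne habne, hnum, neg_div]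
  have hβabs : |β| ≤ C / (Tl * |a - b|) := by
    rw [hβeq, abs_neg, abs_div, abs_mul, abs_of_pos hTl0]
    apply div_le_div_of_nonneg_right hC' ?_ |>.trans_eq rfl
    · positivity
  rw [hkey, norm_smul, Real.norm_eq_abs, hd]
  have hnorm : ‖f_m - f_p‖ ≤ ‖f_p‖ + ‖f_m‖ := by
    calc ‖f_m - f_p‖ ≤ ‖f_m‖ + ‖f_p‖ := norm_sub_le _ _
    _ = ‖f_p‖ + ‖f_m‖ := by ring
  have hden : 0 < (ℓ : ℝ) * t_low * |a - b| := by
    have : 0 < |a - b| := abs_pos.mpr habne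
    positivity
  have hβabs2 : |β| ≤ C / ((ℓ : ℝ) * t_low * |a - b|) := by
    refine hβabs.trans (div_le_div_of_nonneg_left hC0 ?_ ?_)
    · positivity
    · have hTlge : (ℓ : ℝ) * t_low ≤ Tl := by linarith
      have : 0 < |a - b| := abs_pos.mpr habne
      nlinarith
  calc |β| * ‖f_m - f_p‖ ≤ (C / ((ℓ : ℝ) * t_low * |a - b|)) * (‖f_p‖ + ‖f_m‖) := by
        apply mul_le_mul hβabs2 hnorm (norm_nonneg _) (by positivity)
    _ = C * (‖f_p‖ + ‖f_m‖) / ((ℓ : ℝ) * t_low * |a - b|) := by ring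
end

section
/- (Monotonicity of the 1D fast return map.) Let m = 1 and define the return map y_0 ↦ y_2 = e^{-(t_1+t_2)}(y_0 - s_-) + e^{-t_2}(s_- - s_+) + s_+, where t_1 = t_1(y_0) and t_2 = t_2(y_1(y_0)) are the switching times. Its derivative is dy_2/dy_0 = e^{-(t_1+t_2)} · (1 - (y_0 - s_-)(1-e^{-t_1})/(c_- - e^{-t_1}(y_0 - s_-))) · (1 - (y_1 - s_+)(1-e^{-t_2})/(c_+ - e^{-t_2}(y_1 - s_+))), where c_± = h_rd f_±, s_± = g_y^{-1} g_x f_± (all scalars), assuming the denominators are nonzero and t_1, t_2 are differentiable functions of y_0 defined implicitly by the switching conditions. -/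
/-- Derivative of the one-dimensional fast return map `y₀ ↦ y₂` by implicit
differentiation of the switching conditions. -/
theorem stmt_16 (c_p c_m s_p s_m : ℝ)
    (t1f t2f y1f y2f : ℝ → ℝ)
    (hy1 : ∀ y, y1f y = Real.exp (-(t1f y)) * (y - s_m) + s_m)
    (ht1 : ∀ y, c_m * t1f y + Real.exp (-(t1f y)) * (y - s_m) + s_m - y = 0)
    (ht2 : ∀ y, c_p * t2f y + Real.exp (-(t2f y)) * (y1f y - s_p) + s_p - y1f y = 0)
    (hy2 : ∀ y, y2f y = Real.exp (-(t1f y + t2f y)) * (y - s_m)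
      + Real.exp (-(t2f y)) * (s_m - s_p) + s_p)
    (y0 : ℝ)
    (hd1 : DifferentiableAt ℝ t1f y0) (hd2 : DifferentiableAt ℝ t2f y0)
    (hden1 : c_m - Real.exp (-(t1f y0)) * (y0 - s_m) ≠ 0)
    (hden2 : c_p - Real.exp (-(t2f y0)) * (y1f y0 - s_p) ≠ 0) :
    deriv y2f y0 =
      Real.exp (-(t1f y0 + t2f y0))
      * (1 - (y0 - s_m) * (1 - Real.exp (-(t1f y0)))
          / (c_m - Real.exp (-(t1f y0)) * (y0 - s_m)))
      * (1 - (y1f y0 - s_p) * (1 - Real.exp (-(t2f y0)))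
          / (c_p - Real.exp (-(t2f y0)) * (y1f y0 - s_p))) := by
  have h1 := hd1.hasDerivAt
  have h2 := hd2.hasDerivAt
  set t1' := deriv t1f y0 with ht1'def
  set t2' := deriv t2f y0 with ht2'def
  set E1 := Real.exp (-(t1f y0)) with hE1def
  set E2 := Real.exp (-(t2f y0)) with hE2def
  have hE1 : HasDerivAt (fun y => Real.exp (-(t1f y))) (E1 * (-t1')) y0 := h1.neg.exp
  have hE2 : HasDerivAt (fun y => Real.exp (-(t2f y))) (E2 * (-t2')) y0 := h2.neg.exp
  have key1 : c_m * t1' + (E1 * (-t1') * (y0 - s_m) + E1 * 1) - 1 = 0 := by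
    have hF := (((h1.const_mul c_m).add (hE1.mul ((hasDerivAt_id y0).sub_const s_m))).add_const s_m).sub (hasDerivAt_id y0)
    have h0 : HasDerivAt (fun y => c_m * t1f y + Real.exp (-(t1f y)) * (y - s_m) + s_m - y) 0 y0 := by
      simp only [ht1]
      exact hasDerivAt_const y0 0
    simpa using hF.unique h0
  have hy1d : HasDerivAt y1f (E1 * (-t1') * (y0 - s_m) + E1 * 1) y0 := by
    have hfe : y1f = fun y => Real.exp (-(t1f y)) * (y - s_m) + s_m := funext hy1
    rw [hfe]
    exact (hE1.mul ((hasDerivAt_id y0).sub_const s_m)).add_const s_m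
  have key2 : c_p * t2' + (E2 * (-t2') * (y1f y0 - s_p) + E2 * (E1 * (-t1') * (y0 - s_m) + E1 * 1)) - (E1 * (-t1') * (y0 - s_m) + E1 * 1) = 0 := by
    have hF := (((h2.const_mul c_p).add (hE2.mul (hy1d.sub_const s_p))).add_const s_p).sub hy1d
    have h0 : HasDerivAt (fun y => c_p * t2f y + Real.exp (-(t2f y)) * (y1f y - s_p) + s_p - y1f y) 0 y0 := by
      simp only [ht2]
      exact hasDerivAt_const y0 0
    simpa using hF.unique h0
  have hE12 : HasDerivAt (fun y => Real.exp (-(t1f y + t2f y))) (Real.exp (-(t1f y0 + t2f y0)) * (-(t1' + t2'))) y0 := (h1.add h2).neg.exp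
  have hy2d : HasDerivAt y2f (Real.exp (-(t1f y0 + t2f y0)) * (-(t1' + t2')) * (y0 - s_m) + Real.exp (-(t1f y0 + t2f y0)) * 1 + E2 * (-t2') * (s_m - s_p)) y0 := by
    have hfe : y2f = fun y => Real.exp (-(t1f y + t2f y)) * (y - s_m) + Real.exp (-(t2f y)) * (s_m - s_p) + s_p := funext hy2
    rw [hfe]
    exact ((hE12.mul ((hasDerivAt_id y0).sub_const s_m)).add (hE2.mul_const (s_m - s_p))).add_const s_p
  rw [hy2d.deriv]
  have hEE : Real.exp (-(t1f y0 + t2f y0)) = E1 * E2 := by rw [neg_add, Real.exp_add]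
  have ht1'eq : t1' = (1 - E1) / (c_m - E1 * (y0 - s_m)) := by
    field_simp
    linear_combination key1
  have ht2'eq : t2' = (E1 * (-t1') * (y0 - s_m) + E1 * 1) * (1 - E2) / (c_p - E2 * (y1f y0 - s_p)) := by
    field_simp
    linear_combination key2
  rw [hEE, ht2'eq, ht1'eq, hy1 y0]
  have hden2' : c_p - E2 * (E1 * (y0 - s_m) + s_m - s_p) ≠ 0 := by
    rw [hy1 y0] at hden2; convert hden2 using 3
  field_simp
  ring
end
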